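/- arXiv:2112.00509 — 2 statements merged into one kernel-verified Lean document; each statement's English description precedes it below -/
import Mathlib

section
/- If G is a cycle of order n ≥ 4, then mvd(G) = ⌊n/2⌋. -/
open SimpleGraph

variable {V : Type*}

/-- There is an `x`–`y` walk all of whose vertices lie in `S`. -/
def ReachableWithin (G : SimpleGraph V) (S : Set V) (x y : V) : Prop :=
  ∃ p : G.Walk x y, ∀ v ∈ p.support, v ∈ S

/-- The vertex set `S` induces a (nonempty) connected subgraph of `G`. -/
def ConnectedOn (G : SimpleGraph V) (S : Set V) : Prop :=
  S.Nonempty ∧ ∀ x ∈ S, ∀ y ∈ S, ReachableWithin G S x y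

/-- `S` is a vertex cut of `G` separating `x` from `y`. -/
def IsCutBetween (G : SimpleGraph V) (x y : V) (S : Set V) : Prop :=
  x ∉ S ∧ y ∉ S ∧ ∀ p : G.Walk x y, ∃ v ∈ p.support, v ∈ S

/-- All vertices of `S` receive the same color under `τ`. -/
def Monochromatic (τ : V → ℕ) (S : Set V) : Prop :=
  ∀ u ∈ S, ∀ v ∈ S, τ u = τ v

/-- `τ` is an MVD-coloring: every pair of distinct nonadjacent vertices is
separated by a monochromatic vertex cut. -/
def IsMVDColoring (G : SimpleGraph V) (τ : V → ℕ) : Prop :=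
  ∀ x y : V, x ≠ y → ¬ G.Adj x y →
    ∃ S : Set V, IsCutBetween G x y S ∧ Monochromatic τ S

/-- The monochromatic vertex-disconnection number: the maximum number of colors
used by an MVD-coloring. -/
noncomputable def mvd (G : SimpleGraph V) : ℕ :=
  sSup {k | ∃ τ : V → ℕ, IsMVDColoring G τ ∧ (Set.range τ).ncard = k}

/-- An `mvd`-coloring: an MVD-coloring attaining `mvd G` colors. -/
def IsOptimalMVDColoring (G : SimpleGraph V) (τ : V → ℕ) : Prop :=
  IsMVDColoring G τ ∧ (Set.range τ).ncard = mvd G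

/-- The subgraph of `G` induced on `S` has no cut vertex. -/
def NoCutVertexOn (G : SimpleGraph V) (S : Set V) : Prop :=
  ∀ v ∈ S, ∀ x ∈ S \ {v}, ∀ y ∈ S \ {v}, ReachableWithin G (S \ {v}) x y

/-- `B` is a block of `G`: a maximal vertex set inducing a connected subgraph
with no cut vertex. -/
def IsBlock (G : SimpleGraph V) (B : Set V) : Prop :=
  ConnectedOn G B ∧ NoCutVertexOn G B ∧
    ∀ C : Set V, B ⊆ C → ConnectedOn G C → NoCutVertexOn G C → C = B

/-- `G` is 2-connected. -/
def TwoConnected (G : SimpleGraph V) : Prop :=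
  3 ≤ Nat.card V ∧ ∀ v : V, ConnectedOn G {u | u ≠ v}

/-- `G` is minimally 2-connected. -/
def MinimallyTwoConnected (G : SimpleGraph V) : Prop :=
  TwoConnected G ∧ ∀ e ∈ G.edgeSet, ¬ TwoConnected (G.deleteEdges {e})

/-!
In an MVD-coloring of `C_n` no color class is a singleton: the two neighbors of a vertex `v`
are nonadjacent since `n ≥ 4`, and a cut between them contains `v` together with a vertex of the
other arc joining them, which must have the color of `v`. Hence at most `n / 2` colors are used.
Conversely, give `k` and `n - k` the same color and merge the colors of `0` and `⌊n / 2⌋`; this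
uses `⌊n / 2⌋` colors, and two nonadjacent vertices are separated by a pair `{a, n - a}` or
`{0, ⌊n / 2⌋}` or `{0, ⌈n / 2⌉}` with one vertex on each arc between them.
-/

namespace IsCutBetween

variable {W : Type*} {G : SimpleGraph V} {H : SimpleGraph W} {x y : V} {S : Set V}

theorem symm (h : IsCutBetween G x y S) : IsCutBetween G y x S := by
  refine ⟨h.2.1, h.1, fun p => ?_⟩
  obtain ⟨v, hv, hvS⟩ := h.2.2 p.reverse
  exact ⟨v, by simpa using hv, hvS⟩

theorem mem_of_adj {v : V} (h : IsCutBetween G x y S) (hxv : G.Adj x v) (hvy : G.Adj v y) :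
    v ∈ S := by
  obtain ⟨w, hw, hwS⟩ := h.2.2 (.cons hxv (.cons hvy .nil))
  simp only [Walk.support_cons, Walk.support_nil, List.mem_cons, List.not_mem_nil,
    or_false] at hw
  rcases hw with rfl | rfl | rfl
  exacts [absurd hwS h.1, hwS, absurd hwS h.2.1]

theorem comap (f : G →g H) {S : Set W} (h : IsCutBetween H (f x) (f y) S) :
    IsCutBetween G x y (f ⁻¹' S) := by
  refine ⟨h.1, h.2.1, fun p => ?_⟩
  obtain ⟨w, hw, hwS⟩ := h.2.2 (p.map f)
  obtain ⟨v, hv, rfl⟩ := List.mem_map.mp (Walk.support_map f p ▸ hw)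
  exact ⟨v, hv, hwS⟩

end IsCutBetween

theorem monochromatic_pair {τ : V → ℕ} {a b : V} (h : τ a = τ b) : Monochromatic τ {a, b} := by
  rintro u (rfl | rfl) v (rfl | rfl) <;> simp [h]

theorem IsMVDColoring.comap {W : Type*} {G : SimpleGraph V} {H : SimpleGraph W} {τ : W → ℕ}
    (hτ : IsMVDColoring H τ) (f : G ↪g H) : IsMVDColoring G (τ ∘ f) := by
  intro x y hne hadj
  obtain ⟨S, hS, hmono⟩ := hτ (f x) (f y) (f.injective.ne hne) (by rwa [f.map_adj_iff])
  exact ⟨f ⁻¹' S, hS.comap f.toHom, fun u hu v hv => hmono _ hu _ hv⟩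

theorem mvd_eq_of_forall_le {G : SimpleGraph V} {τ : V → ℕ} {k : ℕ} (hτ : IsMVDColoring G τ)
    (hk : (Set.range τ).ncard = k)
    (hle : ∀ σ : V → ℕ, IsMVDColoring G σ → (Set.range σ).ncard ≤ k) : mvd G = k :=
  IsGreatest.csSup_eq ⟨⟨τ, hτ, hk⟩, by rintro _ ⟨σ, hσ, rfl⟩; exact hle σ hσ⟩

theorem IsMVDColoring.exists_of_iso {W : Type*} {G : SimpleGraph V} {H : SimpleGraph W}
    (e : G ≃g H) {k : ℕ} (h : ∃ τ : W → ℕ, IsMVDColoring H τ ∧ (Set.range τ).ncard = k) :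
    ∃ τ : V → ℕ, IsMVDColoring G τ ∧ (Set.range τ).ncard = k := by
  obtain ⟨τ, hτ, rfl⟩ := h
  exact ⟨τ ∘ e, hτ.comap e.toEmbedding, congrArg _ (EquivLike.range_comp τ e)⟩

theorem mvd_congr {W : Type*} {G : SimpleGraph V} {H : SimpleGraph W} (e : G ≃g H) :
    mvd G = mvd H :=
  congrArg sSup <| Set.ext fun _ =>
    ⟨IsMVDColoring.exists_of_iso e.symm, IsMVDColoring.exists_of_iso e⟩

theorem two_mul_ncard_range_le {α β : Type*} [Fintype α] (f : α → β)
    (h : ∀ a, ∃ b ≠ a, f b = f a) : 2 * (Set.range f).ncard ≤ Fintype.card α := by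
  classical
  rw [← Set.image_univ, ← Finset.coe_univ, ← Finset.coe_image, Set.ncard_coe_finset]
  refine Finset.mul_card_image_le_card _ 2 fun c hc => ?_
  obtain ⟨a, -, rfl⟩ := Finset.mem_image.mp hc
  obtain ⟨b, hba, hb⟩ := h a
  exact Finset.one_lt_card.mpr ⟨a, by simp, b, by simp [hb], hba.symm⟩

namespace SimpleGraph

theorem cycleGraph_adj_iff_val {n : ℕ} (hn : 2 ≤ n) {u v : Fin n} :
    (cycleGraph n).Adj u v ↔ u.val + 1 = v.val ∨ v.val + 1 = u.val ∨
      (u.val = 0 ∧ v.val + 1 = n) ∨ (v.val = 0 ∧ u.val + 1 = n) := by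
  rw [cycleGraph_adj']
  rcases lt_trichotomy u v with h | rfl | h
  · rw [Fin.coe_sub_iff_lt.mpr h, Fin.sub_val_of_le h.le]
    omega
  · rw [Fin.sub_val_of_le le_rfl]
    omega
  · rw [Fin.sub_val_of_le h.le, Fin.coe_sub_iff_lt.mpr h]
    omega

namespace cycleGraph

variable {n : ℕ} {a b : Fin n}

theorem mem_Icc_of_adj {u v : Fin n} (h : (cycleGraph n).Adj u v) (hu : u ∈ Set.Ioo a b) :
    v ∈ Set.Icc a b := by
  have hn : 2 ≤ n := by simp only [Set.mem_Ioo] at hu; omega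
  rw [cycleGraph_adj_iff_val hn] at h
  simp only [Set.mem_Ioo, Set.mem_Icc] at hu ⊢
  omega

theorem mem_Ioo_of_walk {u v : Fin n} (p : (cycleGraph n).Walk u v) (hu : u ∈ Set.Ioo a b)
    (ha : a ∉ p.support) (hb : b ∉ p.support) : v ∈ Set.Ioo a b := by
  induction p with
  | nil => exact hu
  | @cons u w v h q ih =>
    simp only [Walk.support_cons, List.mem_cons, not_or] at ha hb
    have hw := mem_Icc_of_adj h hu
    have hwa : a ≠ w := fun e => ha.2 (e ▸ q.start_mem_support)
    have hwb : b ≠ w := fun e => hb.2 (e ▸ q.start_mem_support)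
    exact ih ⟨lt_of_le_of_ne hw.1 hwa, lt_of_le_of_ne' hw.2 hwb⟩ ha.2 hb.2

theorem isCutBetween_pair {x y : Fin n} (hx : x ∈ Set.Ioo a b) (hy : y ∉ Set.Icc a b) :
    IsCutBetween (cycleGraph n) x y {a, b} := by
  simp only [Set.mem_Ioo, Set.mem_Icc] at hx hy
  refine ⟨?_, ?_, fun p => ?_⟩
  · rintro (rfl | rfl) <;> omega
  · rintro (rfl | rfl) <;> omega
  · by_contra! hp
    have := mem_Ioo_of_walk p hx (fun ha => hp a ha (.inl rfl)) (fun hb => hp b hb (.inr rfl))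
    exact hy (Set.Ioo_subset_Icc_self this)

end cycleGraph

end SimpleGraph

section

open Fin.CommRing

namespace SimpleGraph.cycleGraph

theorem exists_walk_add {n : ℕ} (u : Fin (n + 2)) (k : ℕ) :
    ∃ p : (cycleGraph (n + 2)).Walk u (u + (k : Fin (n + 2))),
      ∀ w ∈ p.support, ∃ i ≤ k, w = u + (i : Fin (n + 2)) := by
  induction k with
  | zero => exact ⟨Walk.nil.copy rfl (by simp), by simp⟩
  | succ k ih =>
    obtain ⟨p, hp⟩ := ih
    have hadj : (cycleGraph (n + 2)).Adj (u + (k : Fin (n + 2)))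
        (u + ((k + 1 : ℕ) : Fin (n + 2))) := cycleGraph_adj.mpr (.inr (by push_cast; abel))
    refine ⟨p.concat hadj, fun w hw => ?_⟩
    rw [Walk.support_concat, List.mem_append, List.mem_singleton] at hw
    rcases hw with hw | rfl
    · obtain ⟨i, hi, rfl⟩ := hp w hw
      exact ⟨i, by omega, rfl⟩
    · exact ⟨k + 1, le_rfl, rfl⟩

end SimpleGraph.cycleGraph

theorem IsMVDColoring.exists_ne_color_eq_of_cycleGraph {n : ℕ} {τ : Fin (n + 4) → ℕ}
    (hτ : IsMVDColoring (cycleGraph (n + 4)) τ) (v : Fin (n + 4)) : ∃ w ≠ v, τ w = τ v := by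
  have hcast {m : ℕ} (hm : 0 < m) (hmn : m < n + 4) : (m : Fin (n + 4)) ≠ 0 := by
    rw [Ne, CharP.cast_eq_zero_iff (Fin (n + 4)) (n + 4)]
    exact Nat.not_dvd_of_pos_of_lt hm hmn
  have hne : v + 1 ≠ v - 1 := fun h =>
    hcast (m := 2) (by omega) (by omega) (by push_cast; linear_combination h)
  have hnadj : ¬ (cycleGraph (n + 4)).Adj (v + 1) (v - 1) := by
    rintro (h | h)
    · exact hcast (m := 1) (by omega) (by omega) (by push_cast; linear_combination h)
    · exact hcast (m := 3) (by omega) (by omega) (by push_cast; linear_combination -h)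
  obtain ⟨S, hS, hmono⟩ := hτ _ _ hne hnadj
  have hvS : v ∈ S := hS.mem_of_adj (cycleGraph_adj.mpr (.inl (by abel)))
    (cycleGraph_adj.mpr (.inl (by abel)))
  obtain ⟨p, hp⟩ := cycleGraph.exists_walk_add (v + 1) (n + 2)
  have hend : v + 1 + ((n + 2 : ℕ) : Fin (n + 4)) = v - 1 := by
    have := CharP.cast_eq_zero (Fin (n + 4)) (n + 4)
    push_cast at this ⊢
    linear_combination this
  obtain ⟨w, hw, hwS⟩ := hS.2.2 (p.copy rfl hend)
  obtain ⟨i, hi, rfl⟩ := hp w (by simpa using hw)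
  refine ⟨_, fun h => ?_, hmono _ hwS _ hvS⟩
  exact hcast (m := i + 1) (by omega) (by omega) (by push_cast; linear_combination h)

end

def reflectionColor (n k : ℕ) : ℕ := min k (n - k) % (n / 2)

theorem reflectionColor_sub {n k : ℕ} (hk : k ≤ n) :
    reflectionColor n (n - k) = reflectionColor n k := by
  rw [reflectionColor, reflectionColor, show min (n - k) (n - (n - k)) = min k (n - k) by omega]

theorem reflectionColor_half (n : ℕ) : reflectionColor n (n / 2) = reflectionColor n 0 := by
  rw [reflectionColor, reflectionColor, show min (n / 2) (n - n / 2) = n / 2 by omega,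
    Nat.mod_self, Nat.zero_min, Nat.zero_mod]

theorem exists_reflectionColor_eq {n x y : ℕ} (hxy : x + 2 ≤ y) (hy : y < n)
    (hwrap : 0 < x ∨ y + 1 < n) : ∃ a b, x < a ∧ a < y ∧ b < n ∧ (b < x ∨ y < b) ∧
      reflectionColor n a = reflectionColor n b := by
  rcases le_or_gt (x + y + 2) n with h | h
  · exact ⟨x + 1, n - (x + 1), by omega, by omega, by omega, by omega,
      (reflectionColor_sub (by omega)).symm⟩
  rcases le_or_gt (n + 2) (x + y) with h' | h'
  · exact ⟨y - 1, n - (y - 1), by omega, by omega, by omega, by omega,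
      (reflectionColor_sub (by omega)).symm⟩
  by_cases hhalf : x < n / 2 ∧ n / 2 < y
  · exact ⟨n / 2, 0, hhalf.1, hhalf.2, by omega, by omega, reflectionColor_half n⟩
  · refine ⟨n - n / 2, 0, by omega, by omega, by omega, by omega, ?_⟩
    rw [reflectionColor_sub (Nat.div_le_self n 2), reflectionColor_half]

theorem isMVDColoring_reflectionColor (n : ℕ) :
    IsMVDColoring (cycleGraph n) fun i : Fin n => reflectionColor n i := by
  intro x y hne hadj
  wlog hlt : x < y generalizing x y
  · obtain ⟨S, hS, hmono⟩ := this y x hne.symm (fun h => hadj h.symm)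
      (lt_of_le_of_ne (not_lt.mp hlt) hne.symm)
    exact ⟨S, hS.symm, hmono⟩
  have hn : 2 ≤ n := by omega
  rw [cycleGraph_adj_iff_val hn] at hadj
  obtain ⟨a, b, hxa, hay, hbn, hb, hab⟩ := exists_reflectionColor_eq (x := x)
    (by omega) y.isLt (by omega)
  rcases hb with hb | hb
  · exact ⟨{⟨b, hbn⟩, ⟨a, by omega⟩},
      cycleGraph.isCutBetween_pair (by simp only [Set.mem_Ioo, Fin.lt_def]; omega)
        (by simp only [Set.mem_Icc, Fin.le_def]; omega),
      monochromatic_pair hab.symm⟩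
  · exact ⟨{⟨a, by omega⟩, ⟨b, hbn⟩},
      (cycleGraph.isCutBetween_pair (by simp only [Set.mem_Ioo, Fin.lt_def]; omega)
        (by simp only [Set.mem_Icc, Fin.le_def]; omega)).symm,
      monochromatic_pair hab⟩

theorem ncard_range_reflectionColor {n : ℕ} (hn : 2 ≤ n) :
    (Set.range fun i : Fin n => reflectionColor n i).ncard = n / 2 := by
  have : (Set.range fun i : Fin n => reflectionColor n i) = Set.Iio (n / 2) := by
    ext c
    refine ⟨?_, fun hc => ⟨⟨c, by simp only [Set.mem_Iio] at hc; omega⟩, ?_⟩⟩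
    · rintro ⟨i, rfl⟩
      exact Nat.mod_lt _ (by omega)
    · simp only [Set.mem_Iio] at hc
      show reflectionColor n c = c
      rw [reflectionColor, min_eq_left (by omega), Nat.mod_eq_of_lt hc]
  rw [this, ← Finset.coe_Iio, Set.ncard_coe_finset, Nat.card_Iio]

/-- A cycle of order `n ≥ 4` has `mvd = ⌊n/2⌋`. -/
theorem stmt4 {n : ℕ} (hn : 4 ≤ n) {V : Type*} (G : SimpleGraph V)
    (h : Nonempty (G ≃g SimpleGraph.cycleGraph n)) :
    mvd G = n / 2 := by
  obtain ⟨e⟩ := h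
  obtain ⟨m, rfl⟩ : ∃ m, n = m + 4 := ⟨n - 4, by omega⟩
  rw [mvd_congr e]
  refine mvd_eq_of_forall_le (isMVDColoring_reflectionColor _)
    (ncard_range_reflectionColor (by omega)) fun σ hσ => ?_
  have := two_mul_ncard_range_le σ hσ.exists_ne_color_eq_of_cycleGraph
  rw [Fintype.card_fin] at this
  omega
end

section
/- If G is a minimally 2-connected graph of order n ≥ 4, then G contains no triangles. -/
/-!
Let `xyz` be a triangle. Since `G - xy` is not 2-connected, some vertex `v` disconnects it;
`v` must be `z`, because every other vertex leaves the detour `x z y` available. Hence in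
`G - z` the edge `xy` is a bridge between `x` and `y`. Now take a fourth vertex `w`. Walking
from `w` towards the triangle in `G - c`, for each `c` of the triangle, and stopping at the
first triangle vertex met shows that `w` reaches two distinct triangle vertices `x`, `y`,
each by a walk meeting the triangle only at its end. Joining these walks gives an `x`–`y`
walk in `G - z` avoiding the edge `xy`, a contradiction.
-/

open SimpleGraph

variable {V : Type*}

namespace ReachableWithin

variable {G : SimpleGraph V} {S T : Set V} {a b c x y : V}

lemma refl (ha : a ∈ S) : ReachableWithin G S a a :=
  ⟨.nil, by simpa using ha⟩

lemma of_adj (h : G.Adj a b) (ha : a ∈ S) (hb : b ∈ S) : ReachableWithin G S a b :=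
  ⟨h.toWalk, by simp [ha, hb]⟩

lemma symm (h : ReachableWithin G S a b) : ReachableWithin G S b a :=
  let ⟨p, hp⟩ := h
  ⟨p.reverse, fun v hv => hp v (by simpa using hv)⟩

lemma trans (hab : ReachableWithin G S a b) (hbc : ReachableWithin G S b c) :
    ReachableWithin G S a c :=
  let ⟨p, hp⟩ := hab
  let ⟨q, hq⟩ := hbc
  ⟨p.append q, fun v hv => (Walk.mem_support_append_iff p q).mp hv |>.elim (hp v) (hq v)⟩

lemma mono (h : ReachableWithin G S a b) (hST : S ⊆ T) : ReachableWithin G T a b :=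
  let ⟨p, hp⟩ := h
  ⟨p, fun v hv => hST (hp v hv)⟩

lemma left_mem (h : ReachableWithin G S a b) : a ∈ S :=
  let ⟨p, hp⟩ := h
  hp a p.start_mem_support

lemma deleteEdges_singleton
    (hxy : x ∈ S → y ∈ S → ReachableWithin (G.deleteEdges {s(x, y)}) S x y)
    (h : ReachableWithin G S a b) : ReachableWithin (G.deleteEdges {s(x, y)}) S a b := by
  obtain ⟨p, hp⟩ := h
  induction p with
  | nil => exact refl (hp _ (by simp))
  | @cons a c b hac p ih =>
    have ha : a ∈ S := hp a (by simp)
    have hc : c ∈ S := hp c (by simp)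
    refine trans ?_ (ih fun v hv => hp v (by simp [hv]))
    by_cases he : s(a, c) = s(x, y)
    · rcases Sym2.eq_iff.mp he with ⟨rfl, rfl⟩ | ⟨rfl, rfl⟩
      · exact hxy ha hc
      · exact (hxy hc ha).symm
    · exact of_adj (by simp [hac, he]) ha hc

lemma exists_first_mem (h : ReachableWithin G S a b) (hb : b ∈ T) :
    ∃ u ∈ T, u ∈ S ∧ ReachableWithin G (insert u (S \ T)) a u := by
  obtain ⟨p, hp⟩ := h
  induction p with
  | nil => exact ⟨_, hb, hp _ (by simp), refl (Set.mem_insert _ _)⟩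
  | @cons a c b hac p ih =>
    have ha : a ∈ S := hp a (by simp)
    by_cases haT : a ∈ T
    · exact ⟨a, haT, ha, refl (Set.mem_insert _ _)⟩
    obtain ⟨u, huT, huS, hcu⟩ := ih hb fun v hv => hp v (by simp [hv])
    exact ⟨u, huT, huS, (of_adj hac (Or.inr ⟨ha, haT⟩) hcu.left_mem).trans hcu⟩

end ReachableWithin

namespace MinimallyTwoConnected

variable {G : SimpleGraph V} {x y z w : V}

lemma not_reachableWithin_deleteEdges (hmin : MinimallyTwoConnected G)
    (hxy : G.Adj x y) (hxz : G.Adj x z) (hyz : G.Adj y z) :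
    ¬ ReachableWithin (G.deleteEdges {s(x, y)}) {u | u ≠ z} x y := by
  intro hreach
  refine hmin.2 s(x, y) hxy ⟨hmin.1.1, fun v => ⟨(hmin.1.2 v).1, fun a ha b hb => ?_⟩⟩
  refine ((hmin.1.2 v).2 a ha b hb).deleteEdges_singleton fun hx hy => ?_
  by_cases hvz : v = z
  · exact hvz ▸ hreach
  · have hxz' : (G.deleteEdges {s(x, y)}).Adj x z := by simp [hxz, hxy.ne, hyz.ne.symm]
    have hzy' : (G.deleteEdges {s(x, y)}).Adj z y := by simp [hyz.symm, hxy.ne.symm, hxz.ne.symm]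
    exact (ReachableWithin.of_adj hxz' hx (Ne.symm hvz)).trans (.of_adj hzy' (Ne.symm hvz) hy)

lemma not_reachableWithin_insert_compl_pair (hmin : MinimallyTwoConnected G) {t : Set V}
    (hxy : G.Adj x y) (hxz : G.Adj x z) (hyz : G.Adj y z) (hx : x ∈ t) (hy : y ∈ t)
    (hz : z ∈ t) (hwx : ReachableWithin G (insert x tᶜ) w x)
    (hwy : ReachableWithin G (insert y tᶜ) w y) : False := by
  have hsub : ∀ a ∈ t, a ≠ z → insert a tᶜ ⊆ {u | u ≠ z} := by
    rintro a - haz u (rfl | hu)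
    · exact haz
    · exact fun huz => hu (huz ▸ hz)
  have hwx' : ReachableWithin (G.deleteEdges {s(x, y)}) {u | u ≠ z} w x :=
    (hwx.deleteEdges_singleton fun _ hy' => absurd hy'
      (by simp [hxy.ne.symm, hy])).mono (hsub x hx hxz.ne)
  have hwy' : ReachableWithin (G.deleteEdges {s(x, y)}) {u | u ≠ z} w y :=
    (hwy.deleteEdges_singleton fun hx' _ => absurd hx'
      (by simp [hxy.ne, hx])).mono (hsub y hy hyz.ne)
  exact hmin.not_reachableWithin_deleteEdges hxy hxz hyz (hwx'.symm.trans hwy')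

end MinimallyTwoConnected

/-- A minimally 2-connected graph of order `n ≥ 4` is triangle-free. -/
theorem stmt8 {V : Type*} [Fintype V] (G : SimpleGraph V)
    (hmin : MinimallyTwoConnected G) (hn : 4 ≤ Fintype.card V) :
    G.CliqueFree 3 := by
  classical
  intro t ht
  have ht3 : t.card = 3 := ht.card_eq
  obtain ⟨w, -, hwt⟩ := Finset.exists_mem_notMem_of_card_lt_card
    (s := t) (t := Finset.univ) (by rw [Finset.card_univ]; omega)
  have reach_first :
      ∀ c ∈ t, ∃ u ∈ t, u ≠ c ∧ ReachableWithin G (insert u (↑t)ᶜ) w u := by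
    intro c hc
    obtain ⟨a, hat, hac⟩ := Finset.exists_mem_ne (s := t) (by omega) c
    have hwa := (hmin.1.2 c).2 w (fun h => hwt (h ▸ hc)) a hac
    obtain ⟨u, hut, huc, hwu⟩ := hwa.exists_first_mem (T := ↑t) hat
    exact ⟨u, hut, huc, hwu.mono (Set.insert_subset_insert fun v hv => hv.2)⟩
  obtain ⟨c, hc⟩ : t.Nonempty := Finset.card_pos.mp (by omega)
  obtain ⟨x, hx, -, hwx⟩ := reach_first c hc
  obtain ⟨y, hy, hyx, hwy⟩ := reach_first x hx
  obtain ⟨z, hz, hzy⟩ := Finset.exists_mem_ne (s := t.erase x) (by simp [hx, ht3]) y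
  have hzx : z ≠ x := Finset.ne_of_mem_erase hz
  replace hz : z ∈ t := Finset.mem_of_mem_erase hz
  exact hmin.not_reachableWithin_insert_compl_pair (ht.1 hx hy hyx.symm) (ht.1 hx hz hzx.symm)
    (ht.1 hy hz hzy.symm) (Finset.mem_coe.2 hx) hy hz hwx hwy
end
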